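/- arXiv:2302.07033 — 2 statements merged into one kernel-verified Lean document; each statement's English description precedes it below -/
import Mathlib

section
/- Let G be a graph with a clustering of terminal vertices such that any two terminals in different clusters Cᵢ, Cⱼ have distance at least L in G, and let G₁' be an induced subgraph of G with |V(G₁')| < L. For each i, let Sᵢ' be the set of vertices of a fixed set S' ⊆ V(G₁') connected in G₁' by a path to some vertex of Cᵢ ⊆ V(G₁'). Then the sets S₁',…,S_r' are pairwise disjoint. -/
open SimpleGraph

/-- The internal vertices of a walk (support minus the two endpoints). -/
def Internal {V : Type*} {G : SimpleGraph V} {u v : V} (p : G.Walk u v) : List V :=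
  p.support.tail.dropLast

/-- Two walks are internally vertex-disjoint if no vertex of one appears as an
internal vertex of the other. -/
def IntDisjoint {V : Type*} {G : SimpleGraph V} {a b c d : V}
    (p : G.Walk a b) (q : G.Walk c d) : Prop :=
  (∀ x ∈ p.support, x ∉ Internal q) ∧ (∀ x ∈ q.support, x ∉ Internal p)

/-- A topological minor model of `H` in `G`. -/
structure TopMinorModel {α β : Type*} (H : SimpleGraph α) (G : SimpleGraph β) where
  η : α → β
  inj : Function.Injective η
  path : ∀ ⦃u v : α⦄, H.Adj u v → G.Walk (η u) (η v)
  isPath : ∀ ⦃u v : α⦄ (h : H.Adj u v), (path h).IsPath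
  avoid : ∀ ⦃u v : α⦄ (h : H.Adj u v), ∀ x ∈ Internal (path h), ∀ w : α, x ≠ η w
  disj : ∀ ⦃u v u' v' : α⦄ (h : H.Adj u v) (h' : H.Adj u' v'),
    s(u, v) ≠ s(u', v') → IntDisjoint (path h) (path h')

/-- A separation of a graph `G`, given by the vertex sets of the two sides. -/
structure Separation {V : Type*} (G : SimpleGraph V) where
  A : Set V
  B : Set V
  cover : A ∪ B = Set.univ
  noEdge : ∀ a ∈ A \ B, ∀ b ∈ B \ A, ¬ G.Adj a b

/-! A vertex of `S i ∩ S j` would join a walk inside `Y` from `C i` to `C j`; its bypass is a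
path inside `Y`, hence has fewer than `Y.ncard < L` edges, against the distance bound. -/

namespace SimpleGraph.Walk

variable {V : Type*} {G : SimpleGraph V} {u v : V}

theorem IsPath.length_lt_ncard {Y : Set V} (hY : Y.Finite) {p : G.Walk u v} (hp : p.IsPath)
    (hpY : ∀ x ∈ p.support, x ∈ Y) : p.length < Y.ncard := by
  classical
  have hsub : p.support.toFinset ⊆ hY.toFinset := fun x hx =>
    hY.mem_toFinset.mpr (hpY x (List.mem_toFinset.mp hx))
  have hcard := Finset.card_le_card hsub
  rw [List.toFinset_card_of_nodup hp.support_nodup, length_support,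
    ← Set.ncard_eq_toFinset_card _ hY] at hcard
  omega

theorem length_bypass_lt_ncard [DecidableEq V] {Y : Set V} (hY : Y.Finite) (p : G.Walk u v)
    (hpY : ∀ x ∈ p.support, x ∈ Y) : p.bypass.length < Y.ncard :=
  p.bypass_isPath.length_lt_ncard hY fun x hx => hpY x (p.support_bypass_subset_support hx)

end SimpleGraph.Walk

theorem stmt12_general {V : Type*} (G : SimpleGraph V) (L : ℕ) (r : ℕ) (C : Fin r → Set V)
    (Y : Set V) (hYfin : Y.Finite) (hYcard : Y.ncard < L)
    (hdist : ∀ i j, i ≠ j → ∀ u ∈ C i, ∀ v ∈ C j, ∀ p : G.Walk u v, L ≤ p.length)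
    (S' : Set V)
    (S : Fin r → Set V)
    (hS : ∀ i, S i = {v ∈ S' | ∃ c ∈ C i, ∃ p : G.Walk v c, p.IsPath ∧
      ∀ x ∈ p.support, x ∈ Y}) :
    ∀ i j, i ≠ j → S i ∩ S j = ∅ := by
  classical
  intro i j hij
  refine Set.eq_empty_of_forall_notMem fun v ⟨hvi, hvj⟩ => ?_
  rw [hS] at hvi hvj
  obtain ⟨-, ci, hci, p, -, hpY⟩ := hvi
  obtain ⟨-, cj, hcj, q, -, hqY⟩ := hvj
  have hwY : ∀ x ∈ (p.reverse.append q).support, x ∈ Y := by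
    intro x hx
    rcases (Walk.mem_support_append_iff _ _).mp hx with hx | hx
    · exact hpY x (by simpa using hx)
    · exact hqY x hx
  have hshort := (p.reverse.append q).length_bypass_lt_ncard hYfin hwY
  have hlong := hdist i j hij ci hci cj hcj (p.reverse.append q).bypass
  omega

/-- the sets of separator vertices reachable from distinct clusters
inside a small induced subgraph are pairwise disjoint. -/
theorem stmt12 {V : Type*} (G : SimpleGraph V) (L : ℕ) (r : ℕ) (C : Fin r → Set V)
    (Y : Set V) (hYfin : Y.Finite) (hYcard : Y.ncard < L)
    (hCY : ∀ i, C i ⊆ Y)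
    (hdist : ∀ i j, i ≠ j → ∀ u ∈ C i, ∀ v ∈ C j, ∀ p : G.Walk u v, L ≤ p.length)
    (S' : Set V) (hS' : S' ⊆ Y)
    (S : Fin r → Set V)
    (hS : ∀ i, S i = {v ∈ S' | ∃ c ∈ C i, ∃ p : G.Walk v c, p.IsPath ∧
      ∀ x ∈ p.support, x ∈ Y}) :
    ∀ i j, i ≠ j → S i ∩ S j = ∅ :=
  stmt12_general G L r C Y hYfin hYcard hdist S' S hS
end

section
/- Let G be a graph, k ∈ ℕ, and let P₁,…,P_k be pairwise internally vertex-disjoint paths in G where Pᵢ joins sᵢ and tᵢ. Let X ⊆ V(G) induce one side of a separation (G[X], G₂) of G with separator S = X ∩ V(G₂). Define the auxiliary graph F* on the vertex set S ∩ ⋃ᵢ V(Pᵢ) where a,b are adjacent iff some Pᵢ has a subpath with endpoints a,b whose internal vertices all lie outside X. Then for every i with sᵢ,tᵢ ∈ X, the path Pᵢ induces an sᵢ–tᵢ path in the graph G[X] augmented with the edges of F*, and these induced paths (over all such i) are pairwise internally vertex-disjoint. -/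
open SimpleGraph

/-- The graph on the side X of a separation augmented with the edges of F. -/
def addEdges {V : Type*} (G : SimpleGraph V) (X : Set V) (F : SimpleGraph V) :
    SimpleGraph V where
  Adj u v := (G.Adj u v ∧ u ∈ X ∧ v ∈ X) ∨ F.Adj u v
  symm := by
    constructor
    intro u v h
    rcases h with ⟨h, hu, hv⟩ | h
    · exact Or.inl ⟨h.symm, hv, hu⟩
    · exact Or.inr h.symm
  loopless := by
    constructor
    intro u h
    rcases h with ⟨h, _, _⟩ | h
    · exact G.irrefl h
    · exact F.irrefl h

/-!
Walking along `Pᵢ`, keep every edge inside `X` and short-cut every excursion out of `X` by the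
`F*`-edge joining its ends. The projected walk visits a subsequence of the vertices of `Pᵢ` with
the same ends, so it is again a path, and its internal vertices are internal vertices of `Pᵢ`:
internal disjointness is inherited from the `Pᵢ`.
-/

theorem List.Sublist.dropLast {α : Type*} {l₁ l₂ : List α} (h : l₁.Sublist l₂) :
    l₁.dropLast.Sublist l₂.dropLast := by
  simpa using h.reverse.tail

namespace SimpleGraph

variable {V : Type*} {G G' : SimpleGraph V}

theorem internal_sublist_of_support_sublist {u v u' v' : V} {p : G.Walk u v}
    {q : G'.Walk u' v'} (h : q.support.Sublist p.support) : (Internal q).Sublist (Internal p) :=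
  h.tail.dropLast

theorem IntDisjoint.mono {a b c d a' b' c' d' : V} {p : G.Walk a b} {q : G.Walk c d}
    {p' : G'.Walk a' b'} {q' : G'.Walk c' d'} (h : IntDisjoint p q)
    (hp : p'.support.Sublist p.support) (hq : q'.support.Sublist q.support) : IntDisjoint p' q' :=
  ⟨fun x hx hxq => h.1 x (hp.subset hx) ((internal_sublist_of_support_sublist hq).subset hxq),
    fun x hx hxp => h.2 x (hq.subset hx) ((internal_sublist_of_support_sublist hp).subset hxp)⟩

def ExcursionsAdj (X : Set V) (F : SimpleGraph V) {u v : V} (p : G.Walk u v) : Prop :=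
  ∀ (a b : V) (w₁ : G.Walk u a) (w₂ : G.Walk a b) (w₃ : G.Walk b v),
    p = w₁.append (w₂.append w₃) → 1 ≤ w₂.length → a ∈ X → b ∈ X → a ≠ b →
    (∀ x ∈ Internal w₂, x ∉ X) → F.Adj a b

variable {X : Set V} {F : SimpleGraph V}

theorem ExcursionsAdj.of_append_right {u v w : V} {p : G.Walk u v} {q : G.Walk v w}
    (h : ExcursionsAdj X F (p.append q)) : ExcursionsAdj X F q :=
  fun a b w₁ w₂ w₃ heq => h a b (p.append w₁) w₂ w₃ (by rw [heq, Walk.append_assoc])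

theorem Walk.exists_eq_append_at_first_mem {c v : V} (p : G.Walk c v) (hc : c ∉ X)
    (hv : v ∈ X) : ∃ (b : V) (w₁ : G.Walk c b) (w₂ : G.Walk b v),
      b ∈ X ∧ p = w₁.append w₂ ∧ ∀ x ∈ w₁.support.dropLast, x ∉ X := by
  induction p with
  | nil => exact absurd hv hc
  | @cons c d v h q ih =>
    by_cases hd : d ∈ X
    · refine ⟨d, cons h nil, q, hd, rfl, ?_⟩
      simpa using hc
    · obtain ⟨b, w₁, w₂, hb, rfl, hw₁⟩ := ih hd hv
      refine ⟨b, cons h w₁, w₂, hb, rfl, ?_⟩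
      rw [Walk.support_cons, List.dropLast_cons_of_ne_nil w₁.support_ne_nil]
      simp only [List.mem_cons]
      rintro x (rfl | hx)
      exacts [hc, hw₁ x hx]

theorem Walk.exists_support_sublist_addEdges {a v : V} (p : G.Walk a v) (hp : p.IsPath)
    (ha : a ∈ X) (hv : v ∈ X) (hF : ExcursionsAdj X F p) :
    ∃ q : (addEdges G X F).Walk a v, q.support.Sublist p.support := by
  induction hn : p.length using Nat.strong_induction_on generalizing a with
  | _ n ih =>
  cases p with
  | nil => exact ⟨nil, .refl _⟩
  | @cons a c v h p =>
    by_cases hc : c ∈ X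
    · obtain ⟨q, hq⟩ := ih p.length (by simp [← hn]) p hp.of_cons hc
        (hF.of_append_right (p := cons h nil)) rfl
      exact ⟨cons (Or.inl ⟨h, ha, hc⟩) q, hq.cons_cons a⟩
    · obtain ⟨b, w₁, w₂, hb, rfl, hw₁⟩ := p.exists_eq_append_at_first_mem hc hv
      have hab : a ≠ b := by
        rintro rfl
        exact (cons_isPath_iff h _).mp hp |>.2 (by simp)
      have hFab : F.Adj a b :=
        hF a b nil (cons h w₁) w₂ rfl (by simp) ha hb hab (by simpa [Internal] using hw₁)
      obtain ⟨q, hq⟩ := ih w₂.length (by simp [← hn]) w₂ hp.of_cons.of_append_right hb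
        (hF.of_append_right (p := cons h w₁)) rfl
      refine ⟨cons (Or.inr hFab) q, (hq.trans ?_).cons_cons a⟩
      exact (w₁.support_suffix_support_append w₂).sublist

end SimpleGraph

theorem stmt17_general {V : Type*} (G : SimpleGraph V) (k : ℕ) (s t : Fin k → V)
    (P : ∀ i, G.Walk (s i) (t i)) (hP : ∀ i, (P i).IsPath)
    (hdisj : ∀ i j, i ≠ j → IntDisjoint (P i) (P j))
    (X : Set V)
    (Fstar : SimpleGraph V)
    (hFseg : ∀ (i : Fin k) (a b : V) (w₁ : G.Walk (s i) a) (w₂ : G.Walk a b)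
      (w₃ : G.Walk b (t i)),
      P i = w₁.append (w₂.append w₃) → 1 ≤ w₂.length → a ∈ X → b ∈ X → a ≠ b →
      (∀ x ∈ Internal w₂, x ∉ X) → Fstar.Adj a b) :
    ∃ Q : ∀ i : {i : Fin k // s i ∈ X ∧ t i ∈ X},
        (addEdges G X Fstar).Walk (s i.1) (t i.1),
      (∀ i, (Q i).IsPath ∧ (Q i).support ⊆ (P i.1).support) ∧
      ∀ i j, i ≠ j → IntDisjoint (Q i) (Q j) := by
  choose Q hQ using fun i : {i : Fin k // s i ∈ X ∧ t i ∈ X} =>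
    (P i.1).exists_support_sublist_addEdges (hP i.1) i.2.1 i.2.2 (hFseg i.1)
  refine ⟨Q, fun i => ⟨.mk' ((hQ i).nodup (hP i.1).support_nodup), (hQ i).subset⟩,
    fun i j hij => ?_⟩
  exact (hdisj i.1 j.1 (Subtype.coe_ne_coe.mpr hij)).mono (hQ i) (hQ j)

/-- projecting internally disjoint paths onto one side of a separation,
replacing excursions through the other side by edges of the auxiliary graph F*. -/
theorem stmt17 {V : Type*} (G : SimpleGraph V) (k : ℕ) (s t : Fin k → V)
    (P : ∀ i, G.Walk (s i) (t i)) (hP : ∀ i, (P i).IsPath)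
    (hdisj : ∀ i j, i ≠ j → IntDisjoint (P i) (P j))
    (X : Set V) (S : Separation G) (hA : S.A = X)
    (Fstar : SimpleGraph V)
    (hFroot : ∀ a b, Fstar.Adj a b → a ∈ S.A ∩ S.B ∧ b ∈ S.A ∩ S.B)
    (hFseg : ∀ (i : Fin k) (a b : V) (w₁ : G.Walk (s i) a) (w₂ : G.Walk a b)
      (w₃ : G.Walk b (t i)),
      P i = w₁.append (w₂.append w₃) → 1 ≤ w₂.length → a ∈ X → b ∈ X → a ≠ b →
      (∀ x ∈ Internal w₂, x ∉ X) → Fstar.Adj a b) :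
    ∃ Q : ∀ i : {i : Fin k // s i ∈ X ∧ t i ∈ X},
        (addEdges G X Fstar).Walk (s i.1) (t i.1),
      (∀ i, (Q i).IsPath ∧ (Q i).support ⊆ (P i.1).support) ∧
      ∀ i j, i ≠ j → IntDisjoint (Q i) (Q j) :=
  stmt17_general G k s t P hP hdisj X Fstar hFseg
end
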